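/- For all real parameters m > 0, k > 0, γ̄ > 0, the unconditional SNR density of the fdRLoS channel integrates to one: ∫₀^∞ ∫₀^∞ f(γ|x) e^{−x} dx dγ = 1. -/

import Mathlib

open MeasureTheory Set

/-- Pochhammer symbol (rising factorial) `(m)_i = m(m+1)⋯(m+i−1)`. -/
noncomputable def poch (m : ℝ) (i : ℕ) : ℝ := ∏ j ∈ Finset.range i, (m + j)

/-- `n`-th harmonic number `H_n = ∑_{j=1}^n 1/j` (with `H_0 = 0`). -/
noncomputable def harmonicR (n : ℕ) : ℝ := ∑ j ∈ Finset.range n, 1 / ((j : ℝ) + 1)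

/-- Kummer confluent hypergeometric function `₁F₁(m, 1, z) = ∑_{i=0}^∞ ((m)_i/(i!)²) z^i`. -/
noncomputable def kummerM (m z : ℝ) : ℝ :=
  ∑' i : ℕ, poch m i / ((Nat.factorial i : ℝ) ^ 2) * z ^ i

/-- Kummer confluent hypergeometric function of the second kind
`U(a, b, z) = (1/Γ(a)) ∫₀^∞ e^{−zt} t^{a−1} (1+t)^{b−a−1} dt`. -/
noncomputable def kummerU (a b z : ℝ) : ℝ :=
  (1 / Real.Gamma a) *
    ∫ t in Ioi (0 : ℝ), Real.exp (-z * t) * t ^ (a - 1) * (1 + t) ^ (b - a - 1)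

/-- Conditional SNR density of the fdRLoS channel,
`f(γ|x)` with `k_x = k/x`, `γ̄_x = ((k+x)/(k+1))·γ̄`. -/
noncomputable def condPdf (m k γb x γ : ℝ) : ℝ :=
  (m ^ m * (1 + k / x)) / ((m + k / x) ^ m * ((k + x) / (k + 1) * γb)) *
    Real.exp (-((1 + k / x) / ((k + x) / (k + 1) * γb)) * γ) *
    kummerM m ((k / x) * (1 + k / x) / (k / x + m) * (γ / ((k + x) / (k + 1) * γb)))

/-- Unconditional SNR density of the fdRLoS channel, `f(γ) = ∫₀^∞ f(γ|x) e^{−x} dx`. -/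
noncomputable def pdfSNR (m k γb γ : ℝ) : ℝ :=
  ∫ x in Ioi (0 : ℝ), condPdf m k γb x γ * Real.exp (-x)


set_option maxHeartbeats 1000000

open Filter

lemma poch_pos {m : ℝ} (hm : 0 < m) (i : ℕ) : 0 < poch m i :=
  Finset.prod_pos fun j _ => by positivity

lemma poch_succ (m : ℝ) (i : ℕ) : poch m (i + 1) = poch m i * (m + i) :=
  Finset.prod_range_succ _ _

lemma poch_le {m : ℝ} (hm : 0 < m) (i : ℕ) :
    poch m i ≤ (max 1 m) ^ i * i.factorial := by
  induction i with
  | zero => simp [poch]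
  | succ n ih =>
    have h1 : (1:ℝ) ≤ max 1 m := le_max_left _ _
    have h2 : m ≤ max 1 m := le_max_right _ _
    have hfac : (0:ℝ) < n.factorial := by positivity
    have hMn : (0:ℝ) < (max 1 m) ^ n := by positivity
    rw [poch_succ]
    have hstep : m + n ≤ max 1 m * (n + 1) := by nlinarith [Nat.cast_nonneg (α := ℝ) n]
    calc poch m n * (m + n) ≤ ((max 1 m) ^ n * n.factorial) * (max 1 m * (n+1)) := by
          apply mul_le_mul ih hstep (by positivity) (by positivity)
      _ = (max 1 m) ^ (n+1) * ((n+1) * n.factorial) := by ring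
      _ = (max 1 m) ^ (n+1) * (n+1).factorial := by
          rw [Nat.factorial_succ]; push_cast; ring

lemma summable_kummer {m : ℝ} (hm : 0 < m) (z : ℝ) :
    Summable (fun i : ℕ => poch m i / (i.factorial : ℝ) ^ 2 * z ^ i) := by
  refine Summable.of_norm_bounded
    (Real.summable_pow_div_factorial (max 1 m * |z|)) fun i => ?_
  have hp := (poch_pos hm i).le
  have hfac : (0:ℝ) < i.factorial := by positivity
  rw [Real.norm_eq_abs, abs_mul, abs_pow, abs_div, abs_of_nonneg hp, abs_pow, abs_of_nonneg hfac.le]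
  rw [mul_pow, div_mul_eq_mul_div, div_le_div_iff₀ (by positivity) hfac]
  have := poch_le hm i
  calc poch m i * |z| ^ i * i.factorial ≤ ((max 1 m) ^ i * i.factorial) * |z| ^ i * i.factorial := by
        apply mul_le_mul_of_nonneg_right (mul_le_mul_of_nonneg_right this (by positivity)) hfac.le
    _ = max 1 m ^ i * |z| ^ i * (i.factorial : ℝ) ^ 2 := by ring

lemma Gamma_poch {m : ℝ} (hm : 0 < m) (i : ℕ) :
    Real.Gamma (m + i) = poch m i * Real.Gamma m := by
  induction i with
  | zero => simp [poch]
  | succ n ih =>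
    have h : m + ((n:ℕ)+1 : ℕ) = (m + n) + 1 := by push_cast; ring
    rw [h, Real.Gamma_add_one (by positivity), ih, poch_succ]
    push_cast
    ring

lemma measurable_kummerM {m : ℝ} (hm : 0 < m) : Measurable (kummerM m) := by
  apply measurable_of_tendsto_metrizable
    (f := fun n z => ∑ i ∈ Finset.range n, poch m i / (i.factorial : ℝ) ^ 2 * z ^ i)
  · intro n
    exact Finset.measurable_sum _ fun i _ => (measurable_id.pow_const i).const_mul _
  · rw [tendsto_pi_nhds]
    intro z
    exact (summable_kummer hm z).hasSum.tendsto_sum_nat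

lemma kummerM_nonneg {m : ℝ} (hm : 0 < m) {z : ℝ} (hz : 0 ≤ z) : 0 ≤ kummerM m z :=
  tsum_nonneg fun i =>
    mul_nonneg (div_nonneg (poch_pos hm i).le (by positivity)) (pow_nonneg hz i)

lemma lintegral_rpow_exp {p b : ℝ} (hp : 0 < p) (hb : 0 < b) :
    ∫⁻ t in Ioi (0:ℝ), ENNReal.ofReal (t ^ (p - 1) * Real.exp (-(b * t)))
      = ENNReal.ofReal ((1 / b) ^ p * Real.Gamma p) := by
  rw [← Real.integral_rpow_mul_exp_neg_mul_Ioi hp hb, ← ofReal_integral_eq_lintegral_ofReal]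
  · have h := integrableOn_rpow_mul_exp_neg_mul_rpow (show (-1:ℝ) < p - 1 by linarith) one_pos hb
    simp only [Real.rpow_one, neg_mul] at h
    exact h
  · filter_upwards [ae_restrict_mem measurableSet_Ioi] with t ht
    have : (0:ℝ) < t := ht
    positivity

lemma lintegral_pow_exp {b : ℝ} (hb : 0 < b) (i : ℕ) :
    ∫⁻ t in Ioi (0:ℝ), ENNReal.ofReal (t ^ i * Real.exp (-(b * t)))
      = ENNReal.ofReal ((i.factorial : ℝ) / b ^ (i + 1)) := by
  have h := lintegral_rpow_exp (show (0:ℝ) < i + 1 by positivity) hb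
  simp only [add_sub_cancel_right, Real.rpow_natCast] at h
  rw [h]
  congr 1
  rw [show ((i:ℝ) + 1) = ((i + 1 : ℕ) : ℝ) by push_cast; ring, Real.rpow_natCast]
  push_cast
  rw [Real.Gamma_nat_eq_factorial]
  field_simp
  rw [← mul_pow, one_div, inv_mul_cancel₀ hb.ne', one_pow]

lemma tsum_binom {m t : ℝ} (hm : 0 < m) (ht0 : 0 ≤ t) (ht1 : t < 1) :
    ∑' i : ℕ, ENNReal.ofReal (poch m i / (i.factorial : ℝ) * t ^ i)
      = ENNReal.ofReal ((1 - t) ^ (-m)) := by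
  have hΓ : 0 < Real.Gamma m := Real.Gamma_pos_of_pos hm
  -- each term via gamma integral
  have key : ∀ i : ℕ, ∫⁻ s in Ioi (0:ℝ),
      ENNReal.ofReal (s ^ (m - 1) * Real.exp (-s) * (t ^ i * s ^ i / i.factorial))
      = ENNReal.ofReal (Real.Gamma m) * ENNReal.ofReal (poch m i / i.factorial * t ^ i) := by
    intro i
    have hcongr : ∫⁻ s in Ioi (0:ℝ),
        ENNReal.ofReal (s ^ (m - 1) * Real.exp (-s) * (t ^ i * s ^ i / i.factorial))
        = ∫⁻ s in Ioi (0:ℝ), ENNReal.ofReal (t ^ i / i.factorial)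
            * ENNReal.ofReal (s ^ (m + i - 1) * Real.exp (-(1 * s))) := by
      apply setLIntegral_congr_fun measurableSet_Ioi
      intro s hs
      beta_reduce
      have hs' : (0:ℝ) < s := hs
      rw [← ENNReal.ofReal_mul (by positivity)]
      congr 1
      rw [show m + (i:ℝ) - 1 = (m - 1) + i by ring, Real.rpow_add hs',
        Real.rpow_natCast]
      ring_nf
    rw [hcongr, lintegral_const_mul' _ _ ENNReal.ofReal_ne_top,
      lintegral_rpow_exp (by positivity) one_pos]
    rw [← ENNReal.ofReal_mul (by positivity), ← ENNReal.ofReal_mul hΓ.le]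
    congr 1
    rw [Gamma_poch hm i]
    simp only [one_div, inv_one, Real.one_rpow, one_mul]
    ring
  -- sum up
  have hmul : ENNReal.ofReal (Real.Gamma m)
      * ∑' i : ℕ, ENNReal.ofReal (poch m i / (i.factorial : ℝ) * t ^ i)
      = ENNReal.ofReal (Real.Gamma m) * ENNReal.ofReal ((1 - t) ^ (-m)) := by
    rw [← ENNReal.tsum_mul_left]
    have : ∀ i : ℕ, ENNReal.ofReal (Real.Gamma m)
        * ENNReal.ofReal (poch m i / (i.factorial : ℝ) * t ^ i)
        = ∫⁻ s in Ioi (0:ℝ),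
          ENNReal.ofReal (s ^ (m - 1) * Real.exp (-s) * (t ^ i * s ^ i / i.factorial)) :=
      fun i => (key i).symm
    rw [tsum_congr this, ← lintegral_tsum]
    · have hin : ∫⁻ s in Ioi (0:ℝ), ∑' i : ℕ,
          ENNReal.ofReal (s ^ (m - 1) * Real.exp (-s) * (t ^ i * s ^ i / i.factorial))
          = ∫⁻ s in Ioi (0:ℝ), ENNReal.ofReal (s ^ (m - 1) * Real.exp (-((1 - t) * s))) := by
        apply setLIntegral_congr_fun measurableSet_Ioi
        intro s hs
        beta_reduce
        have hs' : (0:ℝ) < s := hs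
        rw [← ENNReal.ofReal_tsum_of_nonneg]
        · congr 1
          have hexp : ∑' i : ℕ, (t * s) ^ i / i.factorial = Real.exp (t * s) := by
            rw [Real.exp_eq_exp_ℝ, NormedSpace.exp_eq_tsum_div]
          calc ∑' i : ℕ, s ^ (m - 1) * Real.exp (-s) * (t ^ i * s ^ i / i.factorial)
              = s ^ (m - 1) * Real.exp (-s) * ∑' i : ℕ, (t * s) ^ i / i.factorial := by
                rw [← tsum_mul_left]
                exact tsum_congr fun i => by rw [mul_pow]
            _ = s ^ (m - 1) * Real.exp (-((1 - t) * s)) := by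
                rw [hexp, mul_assoc, ← Real.exp_add]
                congr 2
                ring
        · intro i; positivity
        · exact ((Real.summable_pow_div_factorial (t * s)).mul_left
            (s ^ (m - 1) * Real.exp (-s))).congr (fun i => by rw [mul_pow])
      rw [hin, lintegral_rpow_exp hm (by linarith)]
      rw [← ENNReal.ofReal_mul hΓ.le]
      congr 1
      rw [one_div, Real.inv_rpow (by linarith : (0:ℝ) ≤ 1 - t), ← Real.rpow_neg (by linarith)]
      ring
    · intro i
      apply Measurable.aemeasurable
      apply Measurable.ennreal_ofReal
      fun_prop
  exact (ENNReal.mul_right_inj (by positivity) ENNReal.ofReal_ne_top).mp hmul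

noncomputable def gTerm (m k γb : ℝ) (i : ℕ) (x γ : ℝ) : ENNReal :=
  ENNReal.ofReal (
    (m ^ m * (1 + k / x)) / ((m + k / x) ^ m * ((k + x) / (k + 1) * γb))
      * (poch m i / (Nat.factorial i : ℝ) ^ 2)
      * ((k / x) * (1 + k / x) / ((k / x + m) * ((k + x) / (k + 1) * γb))) ^ i
      * Real.exp (-x)
      * (γ ^ i * Real.exp (-((1 + k / x) / ((k + x) / (k + 1) * γb) * γ))))

section
variable {m k γb : ℝ} (hm : 0 < m) (hk : 0 < k) (hγb : 0 < γb)
include hm hk hγb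

lemma condPdf_eq {x γ : ℝ} (hx : 0 < x) (hγ : 0 < γ) :
    ENNReal.ofReal (condPdf m k γb x γ * Real.exp (-x)) = ∑' i : ℕ, gTerm m k γb i x γ := by
  have hB : 0 < (k + x) / (k + 1) * γb := by positivity
  set B := (k + x) / (k + 1) * γb with hBdef
  set A := (m ^ m * (1 + k / x)) / ((m + k / x) ^ m * B) with hAdef
  set c := (k / x) * (1 + k / x) / ((k / x + m) * B) with hcdef
  have hA : 0 ≤ A := by positivity
  have hc : 0 ≤ c := by positivity
  have hZ : (k / x) * (1 + k / x) / (k / x + m) * (γ / B) = c * γ := by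
    rw [hcdef, div_mul_div_comm, div_mul_eq_mul_div]
    ring
  have hreal : condPdf m k γb x γ * Real.exp (-x)
      = ∑' i : ℕ, (A * (poch m i / (Nat.factorial i : ℝ) ^ 2) * c ^ i * Real.exp (-x)
          * (γ ^ i * Real.exp (-((1 + k / x) / B * γ)))) := by
    rw [condPdf, hZ, kummerM]
    rw [show (-((1 + k / x) / B) * γ) = -((1 + k / x) / B * γ) by ring]
    calc A * Real.exp (-((1 + k / x) / B * γ))
          * (∑' i : ℕ, poch m i / ((Nat.factorial i : ℝ) ^ 2) * (c * γ) ^ i) * Real.exp (-x)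
        = (A * Real.exp (-((1 + k / x) / B * γ)) * Real.exp (-x))
          * ∑' i : ℕ, poch m i / ((Nat.factorial i : ℝ) ^ 2) * (c * γ) ^ i := by ring
      _ = ∑' i : ℕ, (A * Real.exp (-((1 + k / x) / B * γ)) * Real.exp (-x))
          * (poch m i / ((Nat.factorial i : ℝ) ^ 2) * (c * γ) ^ i) := tsum_mul_left.symm
      _ = _ := tsum_congr fun i => by rw [mul_pow]; ring
  rw [hreal]
  rw [ENNReal.ofReal_tsum_of_nonneg]
  · rfl
  · intro i
    have hp := (poch_pos hm i).le
    positivity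
  · exact ((summable_kummer hm (c * γ)).mul_left
      (A * Real.exp (-((1 + k / x) / B * γ)) * Real.exp (-x))).congr
      (fun i => by rw [mul_pow]; ring)

lemma sum_per_x {x : ℝ} (hx : 0 < x) :
    ∑' i : ℕ, ∫⁻ γ in Ioi (0:ℝ), gTerm m k γb i x γ = ENNReal.ofReal (Real.exp (-x)) := by
  have hB : 0 < (k + x) / (k + 1) * γb := by positivity
  set B := (k + x) / (k + 1) * γb with hBdef
  set A := (m ^ m * (1 + k / x)) / ((m + k / x) ^ m * B) with hAdef
  set c := (k / x) * (1 + k / x) / ((k / x + m) * B) with hcdef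
  set β := (1 + k / x) / B with hβdef
  have hκ : 0 < k / x := by positivity
  have hβ : 0 < β := by positivity
  have hA : 0 ≤ A := by positivity
  have hc : 0 ≤ c := by positivity
  have hBne : B ≠ 0 := ne_of_gt hB
  have h1κ : (1 : ℝ) + k / x ≠ 0 := by positivity
  have hκm : k / x + m ≠ 0 := by positivity
  have ht : c / β = (k / x) / (k / x + m) := by
    rw [hcdef, hβdef]
    field_simp
  have hAβ : A / β = m ^ m / (m + k / x) ^ m := by
    rw [hAdef, hβdef]
    have h2 : ((m + k / x) ^ m : ℝ) ≠ 0 := by positivity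
    field_simp
  clear_value B A c β
  -- integral of each term
  have hint : ∀ i : ℕ, ∫⁻ γ in Ioi (0:ℝ), gTerm m k γb i x γ
      = ENNReal.ofReal ((Real.exp (-x) * (A / β))
          * (poch m i / (Nat.factorial i : ℝ) * (c / β) ^ i)) := by
    intro i
    have hKnn : 0 ≤ A * (poch m i / (Nat.factorial i : ℝ) ^ 2) * c ^ i * Real.exp (-x) := by
      have hp := (poch_pos hm i).le
      positivity
    have : ∀ γ : ℝ, gTerm m k γb i x γ
        = ENNReal.ofReal (A * (poch m i / (Nat.factorial i : ℝ) ^ 2) * c ^ i * Real.exp (-x))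
          * ENNReal.ofReal (γ ^ i * Real.exp (-(β * γ))) := by
      intro γ
      simp only [gTerm]
      rw [← hBdef, ← hAdef, ← hcdef, ← hβdef, ← ENNReal.ofReal_mul hKnn]
    rw [lintegral_congr this]
    rw [lintegral_const_mul' _ _ ENNReal.ofReal_ne_top, lintegral_pow_exp hβ i,
      ← ENNReal.ofReal_mul hKnn]
    congr 1
    have hfac : ((Nat.factorial i : ℝ)) ≠ 0 := by positivity
    have hβ' : β ≠ 0 := ne_of_gt hβ
    rw [div_pow, pow_succ]
    field_simp
    ring
  simp_rw [hint]
  have hEnn : 0 ≤ Real.exp (-x) * (A / β) := by positivity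
  simp_rw [fun i : ℕ => ENNReal.ofReal_mul (p := Real.exp (-x) * (A / β))
    (q := poch m i / (Nat.factorial i : ℝ) * (c / β) ^ i) hEnn]
  rw [ENNReal.tsum_mul_left]
  have ht0 : 0 ≤ c / β := by positivity
  have ht1 : c / β < 1 := by
    rw [ht, div_lt_one (by positivity)]
    linarith
  rw [tsum_binom hm ht0 ht1, ← ENNReal.ofReal_mul hEnn]
  congr 1
  have h1t : 1 - c / β = m / (k / x + m) := by
    rw [ht]
    field_simp
    ring
  rw [h1t, hAβ, Real.rpow_neg (by positivity), Real.div_rpow hm.le (by positivity)]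
  rw [show k / x + m = m + k / x by ring]
  have h3 : (0:ℝ) < (m + k / x) ^ m := by positivity
  have h4 : (0:ℝ) < m ^ m := by positivity
  field_simp

lemma condPdf_nonneg {x γ : ℝ} (hx : 0 < x) (hγ : 0 ≤ γ) : 0 ≤ condPdf m k γb x γ := by
  have h1 : 0 ≤ (m ^ m * (1 + k / x)) / ((m + k / x) ^ m * ((k + x) / (k + 1) * γb)) := by
    positivity
  have h2 : 0 ≤ (k / x) * (1 + k / x) / (k / x + m) * (γ / ((k + x) / (k + 1) * γb)) := by
    positivity
  exact mul_nonneg (mul_nonneg h1 (Real.exp_nonneg _)) (kummerM_nonneg hm h2)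

lemma main_lint :
    ∫⁻ γ in Ioi (0:ℝ), ∫⁻ x in Ioi (0:ℝ),
      ENNReal.ofReal (condPdf m k γb x γ * Real.exp (-x)) = 1 := by
  have hgm : ∀ i : ℕ, Measurable (fun p : ℝ × ℝ => gTerm m k γb i p.1 p.2) := by
    intro i
    apply Measurable.ennreal_ofReal
    fun_prop
  calc ∫⁻ γ in Ioi (0:ℝ), ∫⁻ x in Ioi (0:ℝ),
        ENNReal.ofReal (condPdf m k γb x γ * Real.exp (-x))
      = ∫⁻ γ in Ioi (0:ℝ), ∫⁻ x in Ioi (0:ℝ), ∑' i : ℕ, gTerm m k γb i x γ := by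
        refine setLIntegral_congr_fun measurableSet_Ioi (fun γ hγ => ?_)
        exact setLIntegral_congr_fun measurableSet_Ioi
          (fun x hx => condPdf_eq hm hk hγb hx hγ)
    _ = ∫⁻ γ in Ioi (0:ℝ), ∑' i : ℕ, ∫⁻ x in Ioi (0:ℝ), gTerm m k γb i x γ := by
        refine lintegral_congr fun γ => ?_
        exact lintegral_tsum fun i => ((hgm i).comp measurable_prodMk_right).aemeasurable
    _ = ∑' i : ℕ, ∫⁻ γ in Ioi (0:ℝ), ∫⁻ x in Ioi (0:ℝ), gTerm m k γb i x γ :=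
        lintegral_tsum fun i => (Measurable.lintegral_prod_left' (hgm i)).aemeasurable
    _ = ∑' i : ℕ, ∫⁻ x in Ioi (0:ℝ), ∫⁻ γ in Ioi (0:ℝ), gTerm m k γb i x γ := by
        refine tsum_congr fun i => ?_
        exact lintegral_lintegral_swap ((hgm i).comp measurable_swap).aemeasurable
    _ = ∫⁻ x in Ioi (0:ℝ), ∑' i : ℕ, ∫⁻ γ in Ioi (0:ℝ), gTerm m k γb i x γ :=
        (lintegral_tsum fun i => (Measurable.lintegral_prod_right' (hgm i)).aemeasurable).symm
    _ = ∫⁻ x in Ioi (0:ℝ), ENNReal.ofReal (Real.exp (-x)) :=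
        setLIntegral_congr_fun measurableSet_Ioi (fun x hx => sum_per_x hm hk hγb hx)
    _ = 1 := by
        rw [← ofReal_integral_eq_lintegral_ofReal]
        · rw [integral_exp_neg_Ioi_zero, ENNReal.ofReal_one]
        · have h := exp_neg_integrableOn_Ioi (0:ℝ) one_pos
          simpa using h.integrable
        · exact ae_of_all _ fun x => Real.exp_nonneg _

theorem pdfSNR_integral_one_core :
    ∫ γ in Ioi (0 : ℝ), ∫ x in Ioi (0 : ℝ), condPdf m k γb x γ * Real.exp (-x) = 1 := by
  have hFm : Measurable (fun p : ℝ × ℝ => condPdf m k γb p.2 p.1 * Real.exp (-p.2)) := by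
    have hK := measurable_kummerM hm
    unfold condPdf
    refine Measurable.mul (Measurable.mul (Measurable.mul ?_ ?_) (hK.comp ?_)) ?_
    · fun_prop
    · fun_prop
    · fun_prop
    · fun_prop
  have hImeas : Measurable (fun γ : ℝ => ∫⁻ x in Ioi (0:ℝ),
      ENNReal.ofReal (condPdf m k γb x γ * Real.exp (-x))) := by
    apply Measurable.lintegral_prod_right' (f := fun p : ℝ × ℝ =>
      ENNReal.ofReal (condPdf m k γb p.2 p.1 * Real.exp (-p.2)))
    exact hFm.ennreal_ofReal
  have hmain := main_lint hm hk hγb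
  have hIlt : ∀ᵐ γ ∂(volume.restrict (Ioi (0:ℝ))),
      (∫⁻ x in Ioi (0:ℝ), ENNReal.ofReal (condPdf m k γb x γ * Real.exp (-x))) < ⊤ := by
    apply ae_lt_top hImeas
    rw [hmain]
    exact ENNReal.one_ne_top
  have hnn : ∀ γ : ℝ, 0 < γ → ∀ x ∈ Ioi (0:ℝ), 0 ≤ condPdf m k γb x γ * Real.exp (-x) :=
    fun γ hγ x hx => mul_nonneg (condPdf_nonneg hm hk hγb hx hγ.le) (Real.exp_nonneg _)
  rw [integral_eq_lintegral_of_nonneg_ae]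
  · have heq : ∫⁻ γ in Ioi (0:ℝ),
        ENNReal.ofReal (∫ x in Ioi (0:ℝ), condPdf m k γb x γ * Real.exp (-x))
        = ∫⁻ γ in Ioi (0:ℝ), ∫⁻ x in Ioi (0:ℝ),
            ENNReal.ofReal (condPdf m k γb x γ * Real.exp (-x)) := by
      refine lintegral_congr_ae ?_
      filter_upwards [hIlt, ae_restrict_mem measurableSet_Ioi] with γ hlt hγ
      rw [integral_eq_lintegral_of_nonneg_ae]
      · rw [ENNReal.ofReal_toReal hlt.ne]
      · exact (ae_restrict_mem measurableSet_Ioi).mono fun x hx => hnn γ hγ x hx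
      · exact (hFm.comp (measurable_const.prodMk measurable_id)).aestronglyMeasurable
    rw [heq, hmain]
    simp
  · filter_upwards [ae_restrict_mem measurableSet_Ioi] with γ hγ
    exact setIntegral_nonneg measurableSet_Ioi (hnn γ hγ)
  · exact hFm.aestronglyMeasurable.integral_prod_right'
end

/-- The unconditional fdRLoS SNR density integrates to one. -/

theorem pdfSNR_integral_one (m k γb : ℝ) (hm : 0 < m) (hk : 0 < k) (hγb : 0 < γb) :
    ∫ γ in Ioi (0 : ℝ), ∫ x in Ioi (0 : ℝ), condPdf m k γb x γ * Real.exp (-x) = 1 := by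
  exact pdfSNR_integral_one_core hm hk hγb
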